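/- arXiv:2510.04387 — 2 statements merged into one kernel-verified Lean document; each statement's English description precedes it below -/
import Mathlib

section
/- Let p be a prime with p ≡ 1 (mod 4) and β ≥ 1 an integer. Then the sum over k from 1 to (p^(2β) - 1)/2 of (k^2 mod p^(2β)) equals (1/4) * p^(3β) * (p^β - 1). -/
lemma exists_sqrt_neg_one (p : ℕ) (hp : p.Prime) (h1 : p % 4 = 1) :
    ∀ k : ℕ, ∃ i : ℤ, (p : ℤ) ^ (k + 1) ∣ i ^ 2 + 1 := by
  haveI : Fact p.Prime := ⟨hp⟩
  have hp5 : 5 ≤ p := by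
    have := hp.two_le
    rcases Nat.lt_or_ge p 5 with h | h
    · interval_cases p <;> omega
    · exact h
  have hp2 : (2 : ℤ) ≤ (p : ℤ) := by exact_mod_cast hp.two_le
  intro k
  induction k with
  | zero =>
    obtain ⟨y, hy⟩ : IsSquare (-1 : ZMod p) :=
      ZMod.exists_sq_eq_neg_one_iff.mpr (by omega)
    refine ⟨(y.val : ℤ), ?_⟩
    rw [pow_one, ← ZMod.intCast_zmod_eq_zero_iff_dvd]
    push_cast
    simp only [ZMod.natCast_val, ZMod.cast_id]
    rw [sq, ← hy]; ring
  | succ k ih =>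
    obtain ⟨i, c, hc⟩ := ih
    have hpi : ¬ (p : ℤ) ∣ i := by
      intro h
      have h1' : (p : ℤ) ∣ i ^ 2 + 1 :=
        dvd_trans (dvd_pow_self _ (Nat.succ_ne_zero k)) ⟨c, hc⟩
      have h2' : (p : ℤ) ∣ i ^ 2 := by rw [sq]; exact h.mul_right i
      have h3' : (p : ℤ) ∣ 1 := by
        have := dvd_sub h1' h2'; simpa using this
      have := Int.le_of_dvd one_pos h3'
      omega
    have h2i : ((2 * i : ℤ) : ZMod p) ≠ 0 := by
      rw [Ne, ZMod.intCast_zmod_eq_zero_iff_dvd]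
      intro h
      rcases (Int.Prime.dvd_mul' (by exact_mod_cast hp) h) with h | h
      · have := Int.le_of_dvd (by norm_num) h; omega
      · exact hpi h
    set t0 : ZMod p := -(c : ZMod p) * ((2 * i : ℤ) : ZMod p)⁻¹ with ht0
    set t : ℤ := (t0.val : ℤ) with ht
    have hkey : (p : ℤ) ∣ c + 2 * i * t + t ^ 2 * (p : ℤ) ^ (k + 1) := by
      rw [← ZMod.intCast_zmod_eq_zero_iff_dvd]
      push_cast
      have htt : ((t : ℤ) : ZMod p) = t0 := by
        rw [ht]; push_cast; simp [ZMod.natCast_val, ZMod.cast_id]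
      rw [htt]
      simp only [ZMod.natCast_self, zero_pow (Nat.succ_ne_zero k), mul_zero, add_zero]
      rw [ht0]
      have : ((2 : ZMod p) * ((i : ℤ) : ZMod p)) * (((2 * i : ℤ) : ZMod p))⁻¹ = 1 := by
        rw [show (2 : ZMod p) * ((i : ℤ) : ZMod p) = ((2 * i : ℤ) : ZMod p) by push_cast; ring]
        exact mul_inv_cancel₀ h2i
      calc ((c : ℤ) : ZMod p) + 2 * ((i : ℤ) : ZMod p) * (-(c : ZMod p) * (((2 * i : ℤ) : ZMod p))⁻¹)
          = ((c : ℤ) : ZMod p) - ((2 : ZMod p) * ((i : ℤ) : ZMod p) * (((2 * i : ℤ) : ZMod p))⁻¹) * ((c : ℤ) : ZMod p) := by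
            push_cast; ring
        _ = 0 := by rw [this]; ring
    obtain ⟨d, hd⟩ := hkey
    refine ⟨i + t * (p : ℤ) ^ (k + 1), d, ?_⟩
    have expand : (i + t * (p : ℤ) ^ (k + 1)) ^ 2 + 1 =
        (p : ℤ) ^ (k + 1) * (c + 2 * i * t + t ^ 2 * (p : ℤ) ^ (k + 1)) := by
      linear_combination hc
    rw [expand, hd]; ring

theorem sum_rem_p_even_pow (p β : ℕ) (hp : p.Prime) (h1 : p % 4 = 1) (hβ : 1 ≤ β) :
    (∑ k ∈ Finset.Icc 1 ((p ^ (2 * β) - 1) / 2),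
        ((k ^ 2 % p ^ (2 * β) : ℕ) : ℚ)) =
      (1 / 4) * (p : ℚ) ^ (3 * β) * ((p : ℚ) ^ β - 1) := by
  haveI : Fact p.Prime := ⟨hp⟩
  have hp5 : 5 ≤ p := by
    have := hp.two_le
    rcases Nat.lt_or_ge p 5 with h | h
    · interval_cases p <;> omega
    · exact h
  set q := p ^ β with hq
  set n := p ^ (2 * β) with hn
  have hnq : n = q ^ 2 := by rw [hn, hq, ← pow_mul, mul_comm]
  have hq5 : 5 ≤ q := le_trans hp5 (Nat.le_self_pow (by omega) p)
  have hp2 : p % 2 = 1 := by omega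
  have hqodd : q % 2 = 1 := by rw [hq, Nat.pow_mod, hp2, one_pow]; norm_num
  have hnodd : n % 2 = 1 := by rw [hnq, Nat.pow_mod, hqodd, one_pow]; norm_num
  have hn25 : 25 ≤ n := by rw [hnq]; nlinarith
  have hnpos : 0 < n := by omega
  set m := (n - 1) / 2 with hm
  have hnm : n = 2 * m + 1 := by omega
  -- get square root of -1 mod n
  obtain ⟨I, hI⟩ := exists_sqrt_neg_one p hp h1 (2 * β - 1)
  rw [show 2 * β - 1 + 1 = 2 * β by omega] at hI
  set i : ℕ := (I % (n : ℤ)).toNat with hidef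
  have hin : (i : ℤ) = I % (n : ℤ) := Int.toNat_of_nonneg (Int.emod_nonneg I (by positivity))
  have hi : n ∣ i ^ 2 + 1 := by
    have h2 : ((n : ℤ)) ∣ (i : ℤ) ^ 2 + 1 := by
      rw [hin]
      have hmod : (I % (n : ℤ)) ≡ I [ZMOD (n : ℤ)] :=
        show (I % (n:ℤ)) % (n:ℤ) = I % (n:ℤ) from Int.emod_emod_of_dvd I dvd_rfl
      have h3 : (I % (n : ℤ)) ^ 2 + 1 ≡ I ^ 2 + 1 [ZMOD (n : ℤ)] := (hmod.pow 2).add_right 1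
      have hI' : ((n : ℕ) : ℤ) ∣ I ^ 2 + 1 := by rw [hn]; push_cast; exact hI
      have h4 : I ^ 2 + 1 ≡ 0 [ZMOD (n : ℤ)] := (Int.modEq_zero_iff_dvd).mpr hI'
      exact (Int.modEq_zero_iff_dvd).mp (h3.trans h4)
    exact_mod_cast h2
  have hicop : Nat.Coprime i n := by
    have ha : Nat.gcd i n ∣ i ^ 2 + 1 := (Nat.gcd_dvd_right i n).trans hi
    have hb : Nat.gcd i n ∣ i ^ 2 := by rw [sq]; exact (Nat.gcd_dvd_left i n).mul_right i
    have hc := Nat.dvd_sub ha hb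
    simpa [Nat.Coprime] using Nat.dvd_one.mp (by simpa using hc)
  have hqn : q ∣ n := by rw [hnq, sq]; exact dvd_mul_right q q
  have hiqcop : Nat.Coprime i q := Nat.Coprime.coprime_dvd_right hqn hicop
  set σ : ℕ → ℕ := fun k => if i * k % n ≤ m then i * k % n else n - i * k % n with hσ
  have hdvd_mod : ∀ a : ℕ, a % n = 0 ↔ n ∣ a := by
    intro a; rw [← Nat.modEq_zero_iff_dvd]; unfold Nat.ModEq; simp
  -- r ≠ 0 for k in range
  have hrne : ∀ k, k ∈ Finset.Icc 1 m → i * k % n ≠ 0 := by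
    intro k hk h0
    rw [Finset.mem_Icc] at hk
    have hd : n ∣ i * k := (hdvd_mod _).mp h0
    have : n ∣ k := Nat.Coprime.dvd_of_dvd_mul_left hicop.symm hd
    have := Nat.le_of_dvd (by omega) this
    omega
  have hσmem : ∀ k, k ∈ Finset.Icc 1 m → σ k ∈ Finset.Icc 1 m := by
    intro k hk
    have hr := Nat.mod_lt (i * k) hnpos
    have hr0 := hrne k hk
    rw [Finset.mem_Icc]
    by_cases hc : i * k % n ≤ m
    · rw [hσ]; simp only [if_pos hc]; omega
    · rw [hσ]; simp only [if_neg hc]; omega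
  -- (n - r)^2 ≡ r^2 [MOD n]
  have hsub_sq : ∀ r : ℕ, r ≤ n → (n - r) ^ 2 ≡ r ^ 2 [MOD n] := by
    intro r hr
    have e1 : (n - r) ^ 2 + (n - r) * r = (n - r) * n := by
      rw [sq, ← Nat.mul_add, Nat.sub_add_cancel hr]
    have e2 : r ^ 2 + (n - r) * r = n * r := by
      rw [sq, ← Nat.add_mul, Nat.add_sub_cancel' hr]
    have d1 : n ∣ (n - r) ^ 2 + (n - r) * r := e1 ▸ dvd_mul_left n (n - r)
    have d2 : n ∣ r ^ 2 + (n - r) * r := e2 ▸ dvd_mul_right n r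
    exact Nat.ModEq.add_right_cancel' _
      ((Nat.modEq_zero_iff_dvd.mpr d1).trans (Nat.modEq_zero_iff_dvd.mpr d2).symm)
  -- σ k squared ≡ (i k)^2
  have hσsq' : ∀ k, (σ k) ^ 2 ≡ (i * k) ^ 2 [MOD n] := by
    intro k
    have hrmod : i * k % n ≡ i * k [MOD n] := Nat.mod_modEq _ n
    by_cases hc : i * k % n ≤ m
    · rw [hσ]; simp only [if_pos hc]; exact hrmod.pow 2
    · rw [hσ]; simp only [if_neg hc]
      exact (hsub_sq _ (Nat.mod_lt (i * k) hnpos).le).trans (hrmod.pow 2)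
  have hσsq : ∀ k, n ∣ k ^ 2 + (σ k) ^ 2 := by
    intro k
    have h5 : k ^ 2 + (i * k) ^ 2 = (i ^ 2 + 1) * k ^ 2 := by ring
    have h6 : n ∣ k ^ 2 + (i * k) ^ 2 := h5 ▸ hi.mul_right (k ^ 2)
    have : k ^ 2 + (σ k) ^ 2 ≡ k ^ 2 + (i * k) ^ 2 [MOD n] :=
      Nat.ModEq.add_left _ (hσsq' k)
    exact Nat.modEq_zero_iff_dvd.mp (this.trans (Nat.modEq_zero_iff_dvd.mpr h6))
  -- q ∣ σ k ↔ q ∣ k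
  have hdvdσ : ∀ k, (q ∣ σ k ↔ q ∣ k) := by
    intro k
    have hrq : i * k % n ≡ i * k [MOD q] := (Nat.mod_modEq _ n).of_dvd hqn
    have hrk : q ∣ i * k % n ↔ q ∣ i * k := by
      rw [← Nat.modEq_zero_iff_dvd, ← Nat.modEq_zero_iff_dvd]
      exact ⟨fun h => hrq.symm.trans h, fun h => hrq.trans h⟩
    have hik : q ∣ i * k ↔ q ∣ k :=
      ⟨fun h => Nat.Coprime.dvd_of_dvd_mul_left hiqcop.symm h,
       fun h => h.mul_left i⟩
    by_cases hc : i * k % n ≤ m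
    · rw [hσ]; simp only [if_pos hc]; rw [hrk, hik]
    · rw [hσ]; simp only [if_neg hc]
      have hrle : i * k % n ≤ n := (Nat.mod_lt (i * k) hnpos).le
      constructor
      · intro h
        have : q ∣ i * k % n := by
          have := Nat.dvd_sub hqn h
          rwa [Nat.sub_sub_self hrle] at this
        exact hik.mp (hrk.mp this)
      · intro h
        exact Nat.dvd_sub hqn (hrk.mpr (hik.mpr h))
  -- modeq to explicit value
  have hmeq : ∀ a b : ℕ, a ≡ b [MOD n] → b < n → a % n = b := by
    intro a b h hb
    unfold Nat.ModEq at h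
    rw [h, Nat.mod_eq_of_lt hb]
  -- involution property
  have hσσ : ∀ k, k ∈ Finset.Icc 1 m → σ (σ k) = k := by
    intro k hk
    rw [Finset.mem_Icc] at hk
    have hrmod : i * k % n ≡ i * k [MOD n] := Nat.mod_modEq _ n
    have hrle : i * k % n < n := Nat.mod_lt (i * k) hnpos
    by_cases hc : i * k % n ≤ m
    · -- σ k = r, show σ r = k
      have hσk : σ k = i * k % n := by simp only [hσ, if_pos hc]
      have c1 : i * (i * k % n) + k ≡ i * (i * k) + k [MOD n] :=
        Nat.ModEq.add_right k (hrmod.mul_left i)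
      have c2 : n ∣ i * (i * k) + k := by
        have e : i * (i * k) + k = (i ^ 2 + 1) * k := by ring
        rw [e]; exact hi.mul_right k
      have c3 : n ∣ (n - k) + k := by
        rw [Nat.sub_add_cancel (by omega : k ≤ n)]
      have c4 : i * (i * k % n) ≡ n - k [MOD n] :=
        Nat.ModEq.add_right_cancel' k
          (c1.trans ((Nat.modEq_zero_iff_dvd.mpr c2).trans
            (Nat.modEq_zero_iff_dvd.mpr c3).symm))
      have c5 : i * (i * k % n) % n = n - k := hmeq _ _ c4 (by omega)
      rw [hσk]
      simp only [hσ, c5, if_neg (by omega : ¬ n - k ≤ m)]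
      omega
    · -- σ k = n - r, show σ (n - r) = k
      have hσk : σ k = n - i * k % n := by simp only [hσ, if_neg hc]
      have d1 : i * (n - i * k % n) + i * (i * k % n) = i * n := by
        rw [← Nat.mul_add, Nat.sub_add_cancel hrle.le]
      have d2 : n ∣ i * (n - i * k % n) + i * (i * k % n) := d1 ▸ dvd_mul_left n i
      have d3 : k + i * (i * k % n) ≡ k + i * (i * k) [MOD n] :=
        Nat.ModEq.add_left k (hrmod.mul_left i)
      have d4 : n ∣ k + i * (i * k) := by
        have e : k + i * (i * k) = (i ^ 2 + 1) * k := by ring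
        rw [e]; exact hi.mul_right k
      have d5 : i * (n - i * k % n) ≡ k [MOD n] :=
        Nat.ModEq.add_right_cancel' _
          ((Nat.modEq_zero_iff_dvd.mpr d2).trans
            ((d3.trans (Nat.modEq_zero_iff_dvd.mpr d4)).symm))
      have d6 : i * (n - i * k % n) % n = k := hmeq _ _ d5 (by omega)
      rw [hσk]
      simp only [hσ, d6, if_pos (by omega : k ≤ m)]
  -- zero terms
  have hzero : ∀ k : ℕ, q ∣ k → k ^ 2 % n = 0 := by
    intro k hk
    have : n ∣ k ^ 2 := hnq ▸ pow_dvd_pow_of_dvd hk 2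
    exact (hdvd_mod _).mpr this
  -- paired terms
  have hpair : ∀ k, k ∈ Finset.Icc 1 m → ¬ q ∣ k → k ^ 2 % n + (σ k) ^ 2 % n = n := by
    intro k hk hq'
    have hk1 : ¬ n ∣ k ^ 2 := by
      rw [hnq]
      intro h
      exact hq' ((Nat.pow_dvd_pow_iff (two_ne_zero)).mp h)
    have hσq : ¬ q ∣ σ k := fun h => hq' ((hdvdσ k).mp h)
    have hk2 : ¬ n ∣ (σ k) ^ 2 := by
      rw [hnq]
      intro h
      exact hσq ((Nat.pow_dvd_pow_iff (two_ne_zero)).mp h)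
    have hm1 : k ^ 2 % n ≠ 0 := fun h => hk1 ((hdvd_mod _).mp h)
    have hm2 : (σ k) ^ 2 % n ≠ 0 := fun h => hk2 ((hdvd_mod _).mp h)
    have hl1 : k ^ 2 % n < n := Nat.mod_lt _ hnpos
    have hl2 : (σ k) ^ 2 % n < n := Nat.mod_lt _ hnpos
    have hsum : n ∣ k ^ 2 % n + (σ k) ^ 2 % n := by
      have : k ^ 2 % n + (σ k) ^ 2 % n ≡ k ^ 2 + (σ k) ^ 2 [MOD n] :=
        (Nat.mod_modEq _ n).add (Nat.mod_modEq _ n)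
      exact Nat.modEq_zero_iff_dvd.mp
        (this.trans (Nat.modEq_zero_iff_dvd.mpr (hσsq k)))
    obtain ⟨c, hc⟩ := hsum
    rcases Nat.lt_or_ge c 2 with h | h
    · interval_cases c <;> omega
    · have : n * 2 ≤ n * c := Nat.mul_le_mul_left n h
      omega
  -- the involution sum
  have key : ∑ k ∈ Finset.Icc 1 m,
      (((k ^ 2 % n : ℕ) : ℚ) - (if q ∣ k then (0 : ℚ) else (n : ℚ) / 2)) = 0 := by
    apply Finset.sum_involution (fun k _ => σ k)
    · intro k hk
      by_cases hq' : q ∣ k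
      · have hq2 : q ∣ σ k := (hdvdσ k).mpr hq'
        rw [hzero k hq', hzero (σ k) hq2, if_pos hq', if_pos hq2]
        norm_num
      · have hq2 : ¬ q ∣ σ k := fun h => hq' ((hdvdσ k).mp h)
        rw [if_neg hq', if_neg hq2]
        have h9 := hpair k hk hq'
        have h10 : ((k ^ 2 % n : ℕ) : ℚ) + (((σ k) ^ 2 % n : ℕ) : ℚ) = (n : ℚ) := by
          exact_mod_cast congrArg (fun x : ℕ => (x : ℚ)) h9
        push_cast at h10 ⊢
        linarith
    · intro k hk hne heq
      by_cases hq' : q ∣ k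
      · rw [hzero k hq', if_pos hq'] at hne
        norm_num at hne
      · have h9 := hpair k hk hq'
        rw [heq] at h9
        omega
    · intro k hk; exact hσmem k hk
    · intro k hk; exact hσσ k hk
  -- extract the sum
  have hsplit : (∑ k ∈ Finset.Icc 1 m, ((k ^ 2 % n : ℕ) : ℚ))
      = ∑ k ∈ Finset.Icc 1 m, (if q ∣ k then (0 : ℚ) else (n : ℚ) / 2) := by
    rw [Finset.sum_sub_distrib] at key
    linarith
  rw [hsplit]
  -- count multiples of q
  have hcount : (Finset.filter (fun k => q ∣ k) (Finset.Icc 1 m)).card = m / q := by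
    have he : Finset.Icc 1 m = Finset.Ioc 0 m := rfl
    rw [he]
    exact Nat.Ioc_filter_dvd_card_eq_div m q
  have hrw : ∀ k : ℕ, (if q ∣ k then (0 : ℚ) else (n : ℚ) / 2)
      = (n : ℚ) / 2 - (if q ∣ k then (n : ℚ) / 2 else 0) := by
    intro k; split <;> ring
  rw [Finset.sum_congr rfl (fun k _ => hrw k), Finset.sum_sub_distrib,
    Finset.sum_const, ← Finset.sum_filter, Finset.sum_const, hcount, Nat.card_Icc]
  -- numeric finish
  set a := (q - 1) / 2 with ha
  have hqa : q = 2 * a + 1 := by omega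
  have hq2a : q ^ 2 = 4 * a ^ 2 + 4 * a + 1 := by rw [hqa]; ring
  have hma : m = 2 * a ^ 2 + 2 * a := by omega
  have hdiv : m / q = a := by
    have he : m = q * a + a := by rw [hqa, hma]; ring
    rw [he, Nat.mul_add_div (by omega : 0 < q), Nat.div_eq_of_lt (by omega : a < q), add_zero]
  have hqc : ((p : ℚ)) ^ β = ((q : ℕ) : ℚ) := by rw [hq]; push_cast; ring
  have hq3 : ((p : ℚ)) ^ (3 * β) = ((q : ℕ) : ℚ) ^ 3 := by
    rw [mul_comm 3 β, pow_mul, hqc]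
  rw [hq3, hqc, hdiv, hma, hnq, hq2a, hqa]
  push_cast
  ring
end

section
/- Define f(n) = (sum over j from 1 to floor(n/4) of floor(sqrt(j*n))) - (n^2 - 1)/12, as a rational number. Then for every integer β ≥ 1, f(2^(2β)) = 2^(2β-3) - 2^(β-2) + 3/4 and f(2^(2β+1)) = 2^(2β-2) - 2^(β-1) + 3/4. -/
open Finset

section Helpers

private lemma sum_range_even_odd' (f : ℕ → ℕ) (n : ℕ) :
    ∑ i ∈ range (2*n), f i = (∑ i ∈ range n, f (2*i)) + ∑ i ∈ range n, f (2*i+1) := by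
  induction n with
  | zero => simp
  | succ n ih =>
      have h : 2 * (n+1) = (2*n + 1) + 1 := by ring
      rw [h, sum_range_succ, sum_range_succ, sum_range_succ, sum_range_succ, ih]
      ring

private lemma sum_range_halves' (f : ℕ → ℕ) (n : ℕ) :
    ∑ i ∈ range (2*n), f i = (∑ i ∈ range n, f i) + ∑ i ∈ range n, f (n+i) := by
  rw [two_mul, Finset.sum_range_add]

private lemma mod_two_mul_pair' (a n : ℕ) (hn : 0 < n) :
    a % (2*n) + (a + n) % (2*n) = 2 * (a % n) + n := by
  have h1 : a % (2*n) % n = a % n := Nat.mod_mod_of_dvd a ⟨2, by ring⟩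
  have h2 : (a + n) % (2*n) = (a % (2*n) + n) % (2*n) := by
    rw [Nat.add_mod a n, Nat.mod_eq_of_lt (show n < 2*n by omega)]
  have hr : a % (2*n) < 2*n := Nat.mod_lt _ (by omega)
  rcases lt_or_ge (a % (2*n)) n with h | h
  · have h4 : a % (2*n) % n = a % (2*n) := Nat.mod_eq_of_lt h
    rw [h2, Nat.mod_eq_of_lt (show a % (2*n) + n < 2*n by omega)]
    omega
  · have h4 : a % (2*n) % n = a % (2*n) - n := by
      rw [Nat.mod_eq_sub_mod h, Nat.mod_eq_of_lt (show a % (2*n) - n < n by omega)]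
    have h3 : (a % (2*n) + n) % (2*n) = a % (2*n) + n - 2*n := by
      rw [Nat.mod_eq_sub_mod (by omega),
        Nat.mod_eq_of_lt (show a % (2*n) + n - 2*n < 2*n by omega)]
    omega

private def EE (e : ℕ) : ℕ := ∑ k ∈ range (2^(e-1)), k^2 % 2^e
private def WW (e : ℕ) : ℕ := ∑ i ∈ range (2^(e-2)), (2*i+1)^2 % 2^e

private lemma WW_rec (γ : ℕ) : WW (γ+4) = 2 * WW (γ+3) + 2^(2*γ+4) := by
  have hW : WW (γ+4) = ∑ i ∈ range (2^(γ+2)), (2*i+1)^2 % 2^(γ+4) := rfl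
  have hsplit : (2:ℕ)^(γ+2) = 2 * 2^(γ+1) := by ring
  rw [hW, hsplit, sum_range_halves']
  have key : ∀ i ∈ range (2^(γ+1)),
      (2*i+1)^2 % 2^(γ+4) + (2*(2^(γ+1)+i)+1)^2 % 2^(γ+4)
        = 2 * ((2*i+1)^2 % 2^(γ+3)) + 2^(γ+3) := by
    intro i _
    have hx : (2*(2^(γ+1)+i)+1)^2 = (2*i+1)^2 + 2^(γ+3) + 2^(γ+4) * (i + 2^γ) := by ring
    have hmod : (2*(2^(γ+1)+i)+1)^2 % 2^(γ+4) = ((2*i+1)^2 + 2^(γ+3)) % 2^(γ+4) := by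
      rw [hx, Nat.add_mul_mod_self_left]
    rw [hmod]
    have h2 : (2:ℕ)^(γ+4) = 2 * 2^(γ+3) := by ring
    rw [h2]
    exact mod_two_mul_pair' _ _ (by positivity)
  rw [← Finset.sum_add_distrib, Finset.sum_congr rfl key, Finset.sum_add_distrib,
    Finset.sum_const, ← Finset.mul_sum]
  have : WW (γ+3) = ∑ i ∈ range (2^(γ+1)), (2*i+1)^2 % 2^(γ+3) := rfl
  rw [← this, card_range, smul_eq_mul]
  ring

private lemma WW_q (γ : ℕ) : (WW (γ+3) : ℚ) = 2^(2*γ+3) - 3*2^(γ+1) := by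
  induction γ with
  | zero =>
      have h2 : WW 3 = 2 := by simp [WW, Finset.sum_range_succ]
      rw [show (0:ℕ)+3 = 3 from rfl, h2]; norm_num
  | succ γ ih =>
      have := WW_rec γ
      have hc : (WW (γ+4) : ℚ) = 2 * (WW (γ+3) : ℚ) + 2^(2*γ+4) := by exact_mod_cast this
      rw [show γ + 1 + 3 = γ + 4 from rfl, hc, ih]
      ring

private lemma P_eq (c : ℕ) : ∑ k ∈ range (2^(c+2)), k^2 % 2^(c+2) = 2 * EE (c+2) := by
  have h : (2:ℕ)^(c+2) = 2*2^(c+1) := by ring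
  rw [h, sum_range_halves']
  have key : ∀ i ∈ range (2^(c+1)),
      (2^(c+1)+i)^2 % (2*2^(c+1)) = i^2 % (2*2^(c+1)) := by
    intro i _
    have hx : (2^(c+1)+i)^2 = i^2 + (2*2^(c+1)) * (i + 2^c) := by ring
    rw [hx, Nat.add_mul_mod_self_left]
  rw [Finset.sum_congr rfl key]
  have : EE (c+2) = ∑ i ∈ range (2^(c+1)), i^2 % 2^(c+2) := rfl
  rw [this, h]
  ring

private lemma EE_rec (c : ℕ) : EE (c+4) = 8 * EE (c+2) + WW (c+4) := by
  have h : EE (c+4) = ∑ k ∈ range (2^(c+3)), k^2 % 2^(c+4) := rfl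
  have h3 : (2:ℕ)^(c+3) = 2*2^(c+2) := by ring
  rw [h, h3, sum_range_even_odd']
  have keven : ∀ m ∈ range (2^(c+2)),
      (2*m)^2 % 2^(c+4) = 4 * (m^2 % 2^(c+2)) := by
    intro m _
    have h1 : (2*m)^2 = 4*m^2 := by ring
    have h2 : (2:ℕ)^(c+4) = 4*2^(c+2) := by ring
    rw [h1, h2, Nat.mul_mod_mul_left]
  rw [Finset.sum_congr rfl keven, ← Finset.mul_sum, P_eq]
  have : WW (c+4) = ∑ i ∈ range (2^(c+2)), (2*i+1)^2 % 2^(c+4) := rfl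
  rw [← this]
  ring

private lemma EE_q_even (γ : ℕ) :
    (EE (2*γ+2) : ℚ) = 2^(4*γ+2) + 3*2^(2*γ) - 3*2^(3*γ+1) := by
  induction γ with
  | zero =>
      have h : EE 2 = 1 := by simp [EE, Finset.sum_range_succ]
      rw [show 2*0+2 = 2 from rfl, h]; norm_num
  | succ γ ih =>
      have hrec := EE_rec (2*γ)
      have hW := WW_q (2*γ+1)
      have hc : (EE (2*γ+4) : ℚ) = 8 * (EE (2*γ+2) : ℚ) + (WW (2*γ+4) : ℚ) := by
        exact_mod_cast hrec
      have he : 2*(γ+1)+2 = 2*γ+4 := by ring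
      have hw4 : (WW (2*γ+4) : ℚ) = 2^(2*(2*γ+1)+3) - 3*2^((2*γ+1)+1) := by
        rw [show 2*γ+4 = (2*γ+1)+3 from by ring]; exact hW
      rw [he, hc, ih, hw4]
      ring

private lemma EE_q_odd (γ : ℕ) :
    (EE (2*γ+3) : ℚ) = 2^(4*γ+4) + 3*2^(2*γ+1) - 2^(3*γ+4) := by
  induction γ with
  | zero =>
      have h : EE 3 = 6 := by simp [EE, Finset.sum_range_succ]
      rw [show 2*0+3 = 3 from rfl, h]; norm_num
  | succ γ ih =>
      have hrec := EE_rec (2*γ+1)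
      have hW := WW_q (2*γ+2)
      have hc : (EE (2*γ+5) : ℚ) = 8 * (EE (2*γ+3) : ℚ) + (WW (2*γ+5) : ℚ) := by
        have : (2*γ+1)+4 = 2*γ+5 := by ring
        rw [← this]
        exact_mod_cast hrec
      have he : 2*(γ+1)+3 = 2*γ+5 := by ring
      have hw5 : (WW (2*γ+5) : ℚ) = 2^(2*(2*γ+2)+3) - 3*2^((2*γ+2)+1) := by
        rw [show 2*γ+5 = (2*γ+2)+3 from by ring]; exact hW
      rw [he, hc, ih, hw5]
      ring

private lemma master (c : ℕ) :
    2^(c+2) * (∑ j ∈ Icc 1 (2^c), Nat.sqrt (j * 2^(c+2)))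
      + ∑ k ∈ Icc 1 (2^(c+1)), k^2
    = 2^(c+2) * (2^(c+1) * 2^c)
      + 2^(c+2) * ((Icc 1 (2^(c+1))).filter (fun k => 2^(c+2) ∣ k^2)).card
      + EE (c+2) := by
  set n := 2^(c+2) with hn
  set J := 2^c with hJ
  set K := 2^(c+1) with hK
  have hn0 : 0 < n := by rw [hn]; positivity
  have hKJ : K^2 = J * n := by rw [hK, hJ, hn]; ring
  have hA : ∀ j ∈ Icc 1 J, Nat.sqrt (j * n)
      = ((Icc 1 K).filter (fun k => k^2 ≤ j * n)).card := by
    intro j hj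
    rw [mem_Icc] at hj
    have hsle : Nat.sqrt (j * n) ≤ K := by
      have h1 : j * n ≤ K^2 := by
        rw [hKJ]; exact Nat.mul_le_mul_right _ hj.2
      calc Nat.sqrt (j * n) ≤ Nat.sqrt (K^2) := Nat.sqrt_le_sqrt h1
        _ = K := Nat.sqrt_eq' K
    have hset : (Icc 1 K).filter (fun k => k^2 ≤ j * n) = Icc 1 (Nat.sqrt (j * n)) := by
      ext k
      simp only [mem_filter, mem_Icc]
      constructor
      · rintro ⟨⟨h1, _⟩, h3⟩
        exact ⟨h1, Nat.le_sqrt.mpr (by rwa [← pow_two])⟩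
      · rintro ⟨h1, h2⟩
        refine ⟨⟨h1, le_trans h2 hsle⟩, ?_⟩
        rw [pow_two]
        exact Nat.le_sqrt.mp h2
    rw [hset, Nat.card_Icc]
    omega
  have hswap : ∑ j ∈ Icc 1 J, Nat.sqrt (j * n)
      = ∑ k ∈ Icc 1 K, ((Icc 1 J).filter (fun j => k^2 ≤ j * n)).card := by
    rw [Finset.sum_congr rfl hA]
    simp only [Finset.card_filter]
    exact Finset.sum_comm
  have hC : ∀ k ∈ Icc 1 K, ((Icc 1 J).filter (fun j => k^2 ≤ j * n)).card
      = J - (k^2 - 1)/n := by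
    intro k hk
    rw [mem_Icc] at hk
    have hk1 : 1 ≤ k^2 := Nat.one_le_pow _ _ hk.1
    have hset : (Icc 1 J).filter (fun j => k^2 ≤ j * n) = Icc ((k^2-1)/n + 1) J := by
      ext j
      simp only [mem_filter, mem_Icc]
      have hiff : k^2 ≤ j * n ↔ (k^2-1)/n + 1 ≤ j := by
        rw [Nat.add_one_le_iff, Nat.div_lt_iff_lt_mul hn0, Nat.lt_iff_add_one_le,
          Nat.sub_add_cancel hk1]
      constructor
      · rintro ⟨⟨_, h2⟩, h3⟩; exact ⟨hiff.mp h3, h2⟩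
      · rintro ⟨h1, h2⟩; exact ⟨⟨le_trans (Nat.le_add_left 1 _) h1, h2⟩, hiff.mpr h1⟩
    rw [hset, Nat.card_Icc, Nat.add_sub_add_right]
  have hdJ : ∀ k ∈ Icc 1 K, (k^2-1)/n ≤ J := by
    intro k hk
    rw [mem_Icc] at hk
    have h2 : k^2 ≤ K^2 := Nat.pow_le_pow_left hk.2 2
    calc (k^2-1)/n ≤ (J*n)/n := Nat.div_le_div_right (by omega)
      _ = J := by rw [mul_comm J n, Nat.mul_div_cancel_left _ hn0]
  have hD : (∑ j ∈ Icc 1 J, Nat.sqrt (j * n)) + (∑ k ∈ Icc 1 K, (k^2-1)/n) = K * J := by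
    rw [hswap, Finset.sum_congr rfl hC, ← Finset.sum_add_distrib]
    have h : ∀ k ∈ Icc 1 K, (J - (k^2-1)/n) + (k^2-1)/n = J := by
      intro k hk
      have hd := hdJ k hk
      generalize hq : (k^2-1)/n = d at *
      omega
    rw [Finset.sum_congr rfl h, Finset.sum_const, Nat.card_Icc, Nat.add_sub_cancel, smul_eq_mul]
  have hE : (∑ k ∈ Icc 1 K, k^2 / n)
      = (∑ k ∈ Icc 1 K, (k^2-1)/n) + ((Icc 1 K).filter (fun k => n ∣ k^2)).card := by
    rw [Finset.card_filter, ← Finset.sum_add_distrib]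
    apply Finset.sum_congr rfl
    intro k hk
    rw [mem_Icc] at hk
    have hk1 : 1 ≤ k^2 := Nat.one_le_pow _ _ hk.1
    have h := Nat.succ_div (a := k^2 - 1) (b := n)
    have h2 : k^2 - 1 + 1 = k^2 := by omega
    rw [h2] at h
    rw [h]
  have hF : n * (∑ k ∈ Icc 1 K, k^2 / n) + (∑ k ∈ Icc 1 K, k^2 % n)
      = ∑ k ∈ Icc 1 K, k^2 := by
    rw [Finset.mul_sum, ← Finset.sum_add_distrib]
    exact Finset.sum_congr rfl fun k _ => Nat.div_add_mod _ n
  have hG : (∑ k ∈ Icc 1 K, k^2 % n) = EE (c+2) := by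
    have h1 : ∑ k ∈ Icc 1 K, k^2 % n = ∑ i ∈ range K, (1+i)^2 % n := by
      rw [← Finset.Ico_add_one_right_eq_Icc, Finset.sum_Ico_eq_sum_range]; norm_num
    have h2 : EE (c+2) = ∑ i ∈ range K, i^2 % n := rfl
    have hdvd : n ∣ K^2 := ⟨J, by rw [hKJ]; ring⟩
    have hK2 : K^2 % n = 0 := Nat.mod_eq_zero_of_dvd hdvd
    have h4 := Finset.sum_range_succ' (fun i => i^2 % n) K
    have h5 := Finset.sum_range_succ (fun i => i^2 % n) K
    have hcomm : ∑ i ∈ range K, (1+i)^2 % n = ∑ i ∈ range K, (i+1)^2 % n := by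
      apply Finset.sum_congr rfl; intro i _; rw [add_comm 1 i]
    have h0 : (0:ℕ)^2 % n = 0 := by simp
    rw [h1, h2, hcomm]
    omega
  have hD' : n * (∑ j ∈ Icc 1 J, Nat.sqrt (j * n)) + n * (∑ k ∈ Icc 1 K, (k^2-1)/n)
      = n * (K * J) := by rw [← mul_add, hD]
  have hE' : n * (∑ k ∈ Icc 1 K, k^2 / n)
      = n * (∑ k ∈ Icc 1 K, (k^2-1)/n)
        + n * ((Icc 1 K).filter (fun k => n ∣ k^2)).card := by rw [hE, mul_add]
  omega

private lemma Icc_one_eq_Ioc (m : ℕ) : Icc 1 m = Ioc 0 m := by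
  ext x; simp [Nat.lt_iff_add_one_le]

private lemma card_dvd_count (m d : ℕ) :
    ((Icc 1 m).filter (fun k => d ∣ k)).card = m / d := by
  rw [Icc_one_eq_Ioc]
  exact Nat.Ioc_filter_dvd_card_eq_div m d

private lemma Z_even (γ : ℕ) :
    ((Icc 1 (2^(2*γ+1))).filter (fun k => 2^(2*γ+2) ∣ k^2)).card = 2^γ := by
  have hiff : ∀ k : ℕ, 2^(2*γ+2) ∣ k^2 ↔ 2^(γ+1) ∣ k := by
    intro k
    have h : (2:ℕ)^(2*γ+2) = (2^(γ+1))^2 := by ring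
    rw [h, Nat.pow_dvd_pow_iff (two_ne_zero)]
  have heq : (Icc 1 (2^(2*γ+1))).filter (fun k => 2^(2*γ+2) ∣ k^2)
      = (Icc 1 (2^(2*γ+1))).filter (fun k => 2^(γ+1) ∣ k) := by
    apply Finset.filter_congr; intro k _; exact iff_iff_eq.mp (hiff k) ▸ Iff.rfl
  rw [heq, card_dvd_count, Nat.pow_div (by omega) (by norm_num)]
  congr 1; omega

private lemma Z_odd (γ : ℕ) :
    ((Icc 1 (2^(2*γ+2))).filter (fun k => 2^(2*γ+3) ∣ k^2)).card = 2^γ := by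
  have hiff : ∀ k : ℕ, 2^(2*γ+3) ∣ k^2 ↔ 2^(γ+2) ∣ k := by
    intro k
    constructor
    · intro h
      rcases eq_or_ne k 0 with hk | hk
      · simp [hk]
      · have hk2 : k^2 ≠ 0 := pow_ne_zero _ hk
        have h1 : 2*γ+3 ≤ (k^2).factorization 2 :=
          (Nat.Prime.pow_dvd_iff_le_factorization Nat.prime_two hk2).mp h
        have h2 : (k^2).factorization 2 = 2 * k.factorization 2 := by
          rw [Nat.factorization_pow]; simp
        rw [h2] at h1
        exact (Nat.Prime.pow_dvd_iff_le_factorization Nat.prime_two hk).mpr (by omega)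
    · rintro ⟨m, rfl⟩
      exact ⟨2*m^2, by ring⟩
  have heq : (Icc 1 (2^(2*γ+2))).filter (fun k => 2^(2*γ+3) ∣ k^2)
      = (Icc 1 (2^(2*γ+2))).filter (fun k => 2^(γ+2) ∣ k) := by
    apply Finset.filter_congr; intro k _; exact iff_iff_eq.mp (hiff k) ▸ Iff.rfl
  rw [heq, card_dvd_count, Nat.pow_div (by omega) (by norm_num)]
  congr 1; omega

private lemma sum_sq_Icc (K : ℕ) : 6 * ∑ k ∈ Icc 1 K, k^2 = K*(K+1)*(2*K+1) := by
  induction K with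
  | zero => simp
  | succ K ih =>
      rw [Finset.sum_Icc_succ_top (by omega), mul_add, ih]
      ring

end Helpers

noncomputable def f (n : ℕ) : ℚ :=
  (∑ j ∈ Finset.Icc 1 (n / 4), (⌊Real.sqrt (j * n)⌋ : ℚ)) - ((n : ℚ) ^ 2 - 1) / 12

private lemma f_eval (c : ℕ) :
    f (2^(c+2)) = ((∑ j ∈ Icc 1 (2^c), Nat.sqrt (j * 2^(c+2)) : ℕ) : ℚ)
      - (((2:ℚ)^(c+2))^2 - 1)/12 := by
  unfold f
  have h4 : (2:ℕ)^(c+2) = 4 * 2^c := by ring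
  have hdiv : (2:ℕ)^(c+2)/4 = 2^c := by omega
  rw [hdiv]
  have hsum : ∀ j : ℕ, (⌊Real.sqrt ((j:ℝ) * ((2^(c+2) : ℕ):ℝ))⌋ : ℚ)
      = ((Nat.sqrt (j * 2^(c+2)) : ℕ) : ℚ) := by
    intro j
    rw [show ((j:ℝ) * ((2^(c+2):ℕ):ℝ)) = ((j * 2^(c+2) : ℕ) : ℝ) by push_cast; ring,
      Real.floor_real_sqrt_eq_nat_sqrt]
    norm_num
  simp only [hsum]
  rw [← Nat.cast_sum]
  norm_num

theorem f_two_pow (β : ℕ) (hβ : 1 ≤ β) :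
    f (2 ^ (2 * β)) = (2 : ℚ) ^ (2 * (β : ℤ) - 3) - (2 : ℚ) ^ ((β : ℤ) - 2) + 3 / 4 ∧
    f (2 ^ (2 * β + 1)) = (2 : ℚ) ^ (2 * (β : ℤ) - 2) - (2 : ℚ) ^ ((β : ℤ) - 1) + 3 / 4 := by
  obtain ⟨γ, rfl⟩ : ∃ γ, β = γ + 1 := ⟨β - 1, by omega⟩
  constructor
  · -- even case
    rw [show 2*(γ+1) = 2*γ+2 from by ring, f_eval (2*γ)]
    have hm := master (2*γ)
    rw [Z_even γ] at hm
    have hmQ : (2:ℚ)^(2*γ+2) * ((∑ j ∈ Icc 1 (2^(2*γ)), Nat.sqrt (j * 2^(2*γ+2)) : ℕ) : ℚ)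
        + ((∑ k ∈ Icc 1 (2^(2*γ+1)), k^2 : ℕ) : ℚ)
        = (2:ℚ)^(2*γ+2) * ((2:ℚ)^(2*γ+1) * (2:ℚ)^(2*γ))
          + (2:ℚ)^(2*γ+2) * (2:ℚ)^γ + ((EE (2*γ+2) : ℕ) : ℚ) := by
      exact_mod_cast hm
    have hsqQ : (6:ℚ) * ((∑ k ∈ Icc 1 (2^(2*γ+1)), k^2 : ℕ) : ℚ)
        = (2:ℚ)^(2*γ+1) * ((2:ℚ)^(2*γ+1)+1) * (2*(2:ℚ)^(2*γ+1)+1) := by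
      exact_mod_cast sum_sq_Icc (2^(2*γ+1))
    have hEQ := EE_q_even γ
    have hSv : 6 * (2:ℚ)^(2*γ+2)
          * ((∑ j ∈ Icc 1 (2^(2*γ)), Nat.sqrt (j * 2^(2*γ+2)) : ℕ) : ℚ)
        = 6*((2:ℚ)^(2*γ+2) * ((2:ℚ)^(2*γ+1) * (2:ℚ)^(2*γ))
            + (2:ℚ)^(2*γ+2) * (2:ℚ)^γ
            + (2^(4*γ+2) + 3*2^(2*γ) - 3*2^(3*γ+1)))
          - (2:ℚ)^(2*γ+1) * ((2:ℚ)^(2*γ+1)+1) * (2*(2:ℚ)^(2*γ+1)+1) := by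
      linear_combination 6*hmQ - hsqQ + 6*hEQ
    have hz1 : (2:ℚ)^(2*((γ+1:ℕ):ℤ)-3) = (2:ℚ)^(2*γ)/2 := by
      rw [show 2*((γ+1:ℕ):ℤ)-3 = ((2*γ:ℕ):ℤ)-1 from by push_cast; ring,
        zpow_sub₀ (two_ne_zero), zpow_natCast, zpow_one]
    have hz2 : (2:ℚ)^(((γ+1:ℕ):ℤ)-2) = (2:ℚ)^γ/2 := by
      rw [show ((γ+1:ℕ):ℤ)-2 = ((γ:ℕ):ℤ)-1 from by push_cast; ring,
        zpow_sub₀ (two_ne_zero), zpow_natCast, zpow_one]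
    rw [hz1, hz2]
    have key : 6 * (2:ℚ)^(2*γ+2)
          * (((∑ j ∈ Icc 1 (2^(2*γ)), Nat.sqrt (j * 2^(2*γ+2)) : ℕ) : ℚ)
            - (((2:ℚ)^(2*γ+2))^2 - 1)/12)
        = 6 * (2:ℚ)^(2*γ+2) * ((2:ℚ)^(2*γ)/2 - (2:ℚ)^γ/2 + 3/4) := by
      linear_combination hSv
    exact mul_left_cancel₀ (by positivity) key
  · -- odd case
    rw [show 2*(γ+1)+1 = 2*γ+3 from by ring]
    have hf : f (2^(2*γ+3)) = ((∑ j ∈ Icc 1 (2^(2*γ+1)), Nat.sqrt (j * 2^(2*γ+3)) : ℕ) : ℚ)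
        - (((2:ℚ)^(2*γ+3))^2 - 1)/12 := f_eval (2*γ+1)
    rw [hf]
    have hm : 2^(2*γ+3) * (∑ j ∈ Icc 1 (2^(2*γ+1)), Nat.sqrt (j * 2^(2*γ+3)))
        + ∑ k ∈ Icc 1 (2^(2*γ+2)), k^2
        = 2^(2*γ+3) * (2^(2*γ+2) * 2^(2*γ+1))
          + 2^(2*γ+3) * ((Icc 1 (2^(2*γ+2))).filter (fun k => 2^(2*γ+3) ∣ k^2)).card
          + EE (2*γ+3) := master (2*γ+1)
    rw [Z_odd γ] at hm
    have hmQ : (2:ℚ)^(2*γ+3) * ((∑ j ∈ Icc 1 (2^(2*γ+1)), Nat.sqrt (j * 2^(2*γ+3)) : ℕ) : ℚ)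
        + ((∑ k ∈ Icc 1 (2^(2*γ+2)), k^2 : ℕ) : ℚ)
        = (2:ℚ)^(2*γ+3) * ((2:ℚ)^(2*γ+2) * (2:ℚ)^(2*γ+1))
          + (2:ℚ)^(2*γ+3) * (2:ℚ)^γ + ((EE (2*γ+3) : ℕ) : ℚ) := by
      exact_mod_cast hm
    have hsqQ : (6:ℚ) * ((∑ k ∈ Icc 1 (2^(2*γ+2)), k^2 : ℕ) : ℚ)
        = (2:ℚ)^(2*γ+2) * ((2:ℚ)^(2*γ+2)+1) * (2*(2:ℚ)^(2*γ+2)+1) := by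
      exact_mod_cast sum_sq_Icc (2^(2*γ+2))
    have hEQ := EE_q_odd γ
    have hSv : 6 * (2:ℚ)^(2*γ+3)
          * ((∑ j ∈ Icc 1 (2^(2*γ+1)), Nat.sqrt (j * 2^(2*γ+3)) : ℕ) : ℚ)
        = 6*((2:ℚ)^(2*γ+3) * ((2:ℚ)^(2*γ+2) * (2:ℚ)^(2*γ+1))
            + (2:ℚ)^(2*γ+3) * (2:ℚ)^γ
            + (2^(4*γ+4) + 3*2^(2*γ+1) - 2^(3*γ+4)))
          - (2:ℚ)^(2*γ+2) * ((2:ℚ)^(2*γ+2)+1) * (2*(2:ℚ)^(2*γ+2)+1) := by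
      linear_combination 6*hmQ - hsqQ + 6*hEQ
    have hz1 : (2:ℚ)^(2*((γ+1:ℕ):ℤ)-2) = (2:ℚ)^(2*γ) := by
      rw [show 2*((γ+1:ℕ):ℤ)-2 = ((2*γ:ℕ):ℤ) from by push_cast; ring, zpow_natCast]
    have hz2 : (2:ℚ)^(((γ+1:ℕ):ℤ)-1) = (2:ℚ)^γ := by
      rw [show ((γ+1:ℕ):ℤ)-1 = ((γ:ℕ):ℤ) from by push_cast; ring, zpow_natCast]
    rw [hz1, hz2]
    have key : 6 * (2:ℚ)^(2*γ+3)
          * (((∑ j ∈ Icc 1 (2^(2*γ+1)), Nat.sqrt (j * 2^(2*γ+3)) : ℕ) : ℚ)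
            - (((2:ℚ)^(2*γ+3))^2 - 1)/12)
        = 6 * (2:ℚ)^(2*γ+3) * ((2:ℚ)^(2*γ) - (2:ℚ)^γ + 3/4) := by
      linear_combination hSv
    exact mul_left_cancel₀ (by positivity) key
end
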